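/- Let d ≥ 2 be even, a_1,…,a_d ∈ F_q nonzero, S = {x ∈ F_q^d : ∑ a_j x_j² = 0}, and dσ the normalized surface measure. If the extension estimate ‖(f dσ)^∨‖_{L^r(dm)} ≤ C‖f‖_{L^p(S,dσ)} holds with C independent of q (for a family of fields F_q with q → ∞), then r ≥ (2d−2)/(d−2). -/

import Mathlib

open Finset BigOperators
open scoped Classical ENNReal

/-!
Test the estimate on `f = 1`. Detecting the quadric `S` by orthogonality of additive characters
turns `q ∑_{x ∈ S} χ(x·m)` into a sum over `t ∈ F_q` of products of one-variable quadratic Gauss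
sums. At a point `m` of the dual quadric `∑ m_j² / a_j = 0`, completing the square leaves no phase,
and since `d` is even the quadratic character of `t` drops out, so every `t ≠ 0` contributes the
same number of modulus `q^{d/2}`. Hence `(dσ)^∨(m)` has modulus about `q^{d/2} / |S|` at the
`|S| - 1` nonzero points `m = (a_j x_j)_j`, `x ∈ S`, while `|S| ≤ 2 q^{d-1}`; this gives
`q^{(d-1)/r - (d-2)/2} ≲ C`. (If `S = {0}` the extension is identically `1` and
`q^{d/r} ≤ C`.) Letting `q → ∞` along the primes forces `(d-1)/r ≤ (d-2)/2`.
-/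

namespace AddChar

variable {A M : Type*} [AddCommMonoid A] [CommMonoid M]

lemma map_sum_eq_prod (ψ : AddChar A M) {ι : Type*} (s : Finset ι) (f : ι → A) :
    ψ (∑ i ∈ s, f i) = ∏ i ∈ s, ψ (f i) := by
  induction s using Finset.cons_induction with
  | empty => simp
  | cons i s hi ih => rw [sum_cons, prod_cons, map_add_eq_mul, ih]

end AddChar

noncomputable abbrev complexQuadraticChar (F : Type*) [Field F] [Fintype F] : MulChar F ℂ :=
  (quadraticChar F).ringHomComp (Int.castRingHom ℂ)

section GaussSum

variable {F : Type*} [Field F] [Fintype F]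

lemma complexQuadraticChar_apply (c : F) :
    complexQuadraticChar F c = (quadraticChar F c : ℂ) :=
  rfl

lemma complexQuadraticChar_sq {c : F} (hc : c ≠ 0) : complexQuadraticChar F c ^ 2 = 1 := by
  rw [complexQuadraticChar_apply, ← Int.cast_pow, quadraticChar_sq_one hc, Int.cast_one]

lemma norm_complexQuadraticChar {c : F} (hc : c ≠ 0) : ‖complexQuadraticChar F c‖ = 1 := by
  rcases quadraticChar_dichotomy hc with h | h <;> simp [h]

lemma complexQuadraticChar_card_sqrts (hF : ringChar F ≠ 2) (u : F) :
    (#{y : F | y ^ 2 = u} : ℂ) = complexQuadraticChar F u + 1 := by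
  have h := quadraticChar_card_sqrts hF u
  rw [Set.toFinset_ofPred] at h
  rw [complexQuadraticChar_apply]
  exact_mod_cast h

variable {ψ : AddChar F ℂ}

lemma sum_addChar_mul_sq (hψ : ψ ≠ 1) (hF : ringChar F ≠ 2) {c : F} (hc : c ≠ 0) :
    ∑ y, ψ (c * y ^ 2) = complexQuadraticChar F c * gaussSum (complexQuadraticChar F) ψ := by
  set η := complexQuadraticChar F
  have hfiber : ∑ y, ψ (c * y ^ 2) = ∑ u, (η u + 1) * ψ (c * u) := by
    rw [← sum_fiberwise univ (· ^ 2) fun y => ψ (c * y ^ 2)]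
    refine sum_congr rfl fun u _ => ?_
    rw [sum_congr rfl fun y hy => by rw [(mem_filter.mp hy).2], sum_const, nsmul_eq_mul,
      complexQuadraticChar_card_sqrts hF]
  have horth : ∑ u, ψ (c * u) = 0 := by
    simpa [mul_comm, hc] using AddChar.sum_mulShift c (AddChar.IsPrimitive.of_ne_one hψ)
  have hshift := gaussSum_mulShift η ψ hc.isUnit.unit
  rw [IsUnit.unit_spec] at hshift
  calc ∑ y, ψ (c * y ^ 2)
      = gaussSum η (ψ.mulShift c) := by
        simp [hfiber, add_mul, sum_add_distrib, horth, gaussSum]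
    _ = η c * (η c * gaussSum η (ψ.mulShift c)) := by
        rw [← mul_assoc, ← sq, complexQuadraticChar_sq hc, one_mul]
    _ = η c * gaussSum η ψ := by rw [hshift]

lemma sum_addChar_mul_sq_add_mul (hψ : ψ ≠ 1) (hF : ringChar F ≠ 2) {c : F} (hc : c ≠ 0)
    (b : F) :
    ∑ y, ψ (c * y ^ 2 + b * y) =
      ψ (-(b ^ 2 / (4 * c))) *
        (complexQuadraticChar F c * gaussSum (complexQuadraticChar F) ψ) := by
  have h2 : (2 : F) ≠ 0 := Ring.two_ne_zero hF
  have h4 : (4 : F) ≠ 0 := by simpa [show (4 : F) = 2 ^ 2 by norm_num] using h2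
  have hsquare : ∀ y, c * y ^ 2 + b * y = c * (y + b / (2 * c)) ^ 2 + -(b ^ 2 / (4 * c)) := by
    intro y
    field_simp
    ring
  simp_rw [hsquare, AddChar.map_add_eq_mul, ← sum_mul]
  rw [Fintype.sum_equiv (Equiv.addRight (b / (2 * c))) (fun y => ψ (c * (y + b / (2 * c)) ^ 2))
      (fun z => ψ (c * z ^ 2)) fun _ => rfl,
    sum_addChar_mul_sq hψ hF hc, mul_comm]

lemma norm_gaussSum_complexQuadraticChar_sq (hψ : ψ ≠ 1) (hF : ringChar F ≠ 2) :
    ‖gaussSum (complexQuadraticChar F) ψ‖ ^ 2 = Fintype.card F := by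
  have hη : complexQuadraticChar F ≠ 1 :=
    (MulChar.ringHomComp_ne_one_iff Int.cast_injective).mpr (quadraticChar_ne_one hF)
  rw [← norm_pow, gaussSum_sq hη ((quadraticChar_isQuadratic F).comp _)
    (AddChar.IsPrimitive.of_ne_one hψ), norm_mul,
    norm_complexQuadraticChar (neg_ne_zero.mpr one_ne_zero), one_mul, Complex.norm_natCast]

variable {ι : Type*} [Fintype ι]

lemma prod_sum_addChar_mul (hψ : ψ ≠ 1) (w : ι → F) :
    ∏ j, ∑ y, ψ (w j * y) = if w = 0 then (Fintype.card F : ℂ) ^ Fintype.card ι else 0 := by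
  simp [mul_comm (w _), AddChar.sum_mulShift _ (AddChar.IsPrimitive.of_ne_one hψ),
    prod_ite_zero, funext_iff]

lemma prod_sum_addChar_of_dual (hψ : ψ ≠ 1) (hF : ringChar F ≠ 2)
    (heven : Even (Fintype.card ι)) {a w : ι → F} (ha : ∀ j, a j ≠ 0)
    (hw : ∑ j, w j ^ 2 / a j = 0) {t : F} (ht : t ≠ 0) :
    ∏ j, ∑ y, ψ (t * a j * y ^ 2 + w j * y) =
      (∏ j, complexQuadraticChar F (a j)) *
        gaussSum (complexQuadraticChar F) ψ ^ Fintype.card ι := by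
  have hphase : ∏ j, ψ (-(w j ^ 2 / (4 * (t * a j)))) = 1 := by
    rw [← AddChar.map_sum_eq_prod, ← ψ.map_zero_eq_one]
    congr 1
    calc ∑ j, -(w j ^ 2 / (4 * (t * a j))) = -(4 * t)⁻¹ * ∑ j, w j ^ 2 / a j := by
          rw [mul_sum]
          refine sum_congr rfl fun j _ => ?_
          field_simp
      _ = 0 := by rw [hw, mul_zero]
  have hsign : complexQuadraticChar F t ^ Fintype.card ι = 1 := by
    obtain ⟨k, hk⟩ := heven
    rw [hk, ← two_mul, pow_mul, complexQuadraticChar_sq ht, one_pow]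
  simp_rw [sum_addChar_mul_sq_add_mul hψ hF (mul_ne_zero ht (ha _)), prod_mul_distrib, map_mul,
    prod_mul_distrib, prod_const, card_univ, hphase, hsign]
  ring

lemma norm_card_sub_one_mul_prod_mul_gaussSum_pow (hψ : ψ ≠ 1) (hF : ringChar F ≠ 2)
    {a : ι → F} (ha : ∀ j, a j ≠ 0) :
    ‖(Fintype.card F - 1 : ℂ) * ((∏ j, complexQuadraticChar F (a j)) *
        gaussSum (complexQuadraticChar F) ψ ^ Fintype.card ι)‖ =
      (Fintype.card F - 1) * (Fintype.card F : ℝ) ^ ((Fintype.card ι : ℝ) / 2) := by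
  have hq : (1 : ℝ) ≤ Fintype.card F := by exact_mod_cast Fintype.card_pos
  have hG : ‖gaussSum (complexQuadraticChar F) ψ‖ ^ Fintype.card ι =
      (Fintype.card F : ℝ) ^ ((Fintype.card ι : ℝ) / 2) := by
    rw [← norm_gaussSum_complexQuadraticChar_sq hψ hF, ← Real.rpow_natCast, ← Real.rpow_two,
      ← Real.rpow_mul (norm_nonneg _)]
    ring_nf
  rw [norm_mul, norm_mul, norm_prod, prod_congr rfl fun j _ => norm_complexQuadraticChar (ha j),
    prod_const_one, one_mul, norm_pow, hG, ← Complex.ofReal_natCast, ← Complex.ofReal_one,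
    ← Complex.ofReal_sub, Complex.norm_real, Real.norm_of_nonneg (by linarith)]

end GaussSum

section Quadric

variable {F : Type*} [Field F] [Fintype F] {ι : Type*} [Fintype ι] [DecidableEq ι]

noncomputable def quadric (a : ι → F) : Finset (ι → F) :=
  univ.filter fun x => ∑ j, a j * x j ^ 2 = 0

lemma zero_mem_quadric (a : ι → F) : 0 ∈ quadric a := by
  simp [quadric]

variable {ψ : AddChar F ℂ}

lemma card_mul_sum_quadric (hψ : ψ ≠ 1) (a w : ι → F) :
    (Fintype.card F : ℂ) * ∑ x ∈ quadric a, ψ (∑ j, x j * w j) =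
      ∑ t, ∏ j, ∑ y, ψ (t * a j * y ^ 2 + w j * y) := by
  calc (Fintype.card F : ℂ) * ∑ x ∈ quadric a, ψ (∑ j, x j * w j)
      = ∑ x : ι → F, (∑ t, ψ (t * ∑ j, a j * x j ^ 2)) * ψ (∑ j, x j * w j) := by
        rw [quadric, sum_filter, mul_sum]
        refine sum_congr rfl fun x _ => ?_
        rw [AddChar.sum_mulShift _ (AddChar.IsPrimitive.of_ne_one hψ)]
        split_ifs <;> simp
    _ = ∑ t, ∑ x : ι → F, ∏ j, ψ (t * a j * x j ^ 2 + w j * x j) := by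
        rw [sum_comm]
        simp_rw [sum_mul, ← AddChar.map_add_eq_mul, mul_sum, ← sum_add_distrib,
          AddChar.map_sum_eq_prod, mul_assoc, mul_comm (w _)]
    _ = ∑ t, ∏ j, ∑ y, ψ (t * a j * y ^ 2 + w j * y) := by
        simp_rw [Fintype.prod_sum]

lemma card_mul_sum_quadric_of_dual (hψ : ψ ≠ 1) (hF : ringChar F ≠ 2)
    (heven : Even (Fintype.card ι)) {a w : ι → F} (ha : ∀ j, a j ≠ 0)
    (hw : ∑ j, w j ^ 2 / a j = 0) :
    (Fintype.card F : ℂ) * ∑ x ∈ quadric a, ψ (∑ j, x j * w j) =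
      (if w = 0 then (Fintype.card F : ℂ) ^ Fintype.card ι else 0) +
        (Fintype.card F - 1) * ((∏ j, complexQuadraticChar F (a j)) *
          gaussSum (complexQuadraticChar F) ψ ^ Fintype.card ι) := by
  rw [card_mul_sum_quadric hψ, ← sum_erase_add _ _ (mem_univ 0)]
  simp only [zero_mul, zero_add]
  rw [prod_sum_addChar_mul hψ, add_comm, sum_congr rfl fun t ht =>
      prod_sum_addChar_of_dual hψ hF heven ha hw (ne_of_mem_erase ht),
    sum_const, card_erase_of_mem (mem_univ _), card_univ, nsmul_eq_mul,
    Nat.cast_sub Fintype.card_pos, Nat.cast_one]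

lemma card_mul_card_quadric (hψ : ψ ≠ 1) (hF : ringChar F ≠ 2)
    (heven : Even (Fintype.card ι)) {a : ι → F} (ha : ∀ j, a j ≠ 0) :
    (Fintype.card F : ℂ) * #(quadric a) =
      (Fintype.card F : ℂ) ^ Fintype.card ι + (Fintype.card F - 1) *
        ((∏ j, complexQuadraticChar F (a j)) *
          gaussSum (complexQuadraticChar F) ψ ^ Fintype.card ι) := by
  simpa using card_mul_sum_quadric_of_dual hψ hF heven ha (w := 0) (by simp)

lemma card_mul_sum_quadric_mul_of_mem (hψ : ψ ≠ 1) (hF : ringChar F ≠ 2)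
    (heven : Even (Fintype.card ι)) {a : ι → F} (ha : ∀ j, a j ≠ 0) {y : ι → F}
    (hy : y ∈ (quadric a).erase 0) :
    (Fintype.card F : ℂ) * ∑ x ∈ quadric a, ψ (∑ j, x j * (a * y) j) =
      (Fintype.card F - 1) * ((∏ j, complexQuadraticChar F (a j)) *
        gaussSum (complexQuadraticChar F) ψ ^ Fintype.card ι) := by
  obtain ⟨hy0, hyS⟩ := mem_erase.mp hy
  have hdual : ∑ j, (a * y) j ^ 2 / a j = 0 := by
    rw [← (mem_filter.mp hyS).2]
    refine sum_congr rfl fun j _ => ?_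
    rw [Pi.mul_apply]
    field_simp [ha j]
  have hay : a * y ≠ 0 := fun h => hy0 (funext fun j => by simpa [ha j] using congrFun h j)
  rw [card_mul_sum_quadric_of_dual hψ hF heven ha hdual, if_neg hay, zero_add]

end Quadric

section Extension

variable {F : Type*} [Field F] [Fintype F] {ι : Type*} [Fintype ι] [DecidableEq ι]

/-- `(f dσ)^∨(m)`, for `dσ` the normalized counting measure on `quadric a`. -/
noncomputable def extension (χ : AddChar F ℂ) (a : ι → F) (f : (ι → F) → ℂ) (m : ι → F) : ℂ :=
  (#(quadric a) : ℂ)⁻¹ * ∑ x ∈ quadric a, f x * χ (∑ j, x j * m j)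

def ExtensionEstimate (χ : AddChar F ℂ) (a : ι → F) (p r C : ℝ) : Prop :=
  ∀ f : (ι → F) → ℂ, (∑ m, ‖extension χ a f m‖ ^ r) ^ (1 / r) ≤
    C * ((#(quadric a) : ℝ)⁻¹ * ∑ x ∈ quadric a, ‖f x‖ ^ p) ^ (1 / p)

variable {χ : AddChar F ℂ} {a : ι → F} {p r C : ℝ}

lemma ExtensionEstimate.sum_rpow_le (h : ExtensionEstimate χ a p r C) (hr : 0 < r) :
    ∑ m, ‖extension χ a 1 m‖ ^ r ≤ C ^ r := by
  have hS : (#(quadric a) : ℝ) ≠ 0 := by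
    exact_mod_cast (card_pos.mpr ⟨0, zero_mem_quadric a⟩).ne'
  have h1 := h 1
  simp only [Pi.one_apply, norm_one, Real.one_rpow, sum_const, nsmul_eq_mul, mul_one,
    inv_mul_cancel₀ hS] at h1
  calc ∑ m, ‖extension χ a 1 m‖ ^ r
      = ((∑ m, ‖extension χ a 1 m‖ ^ r) ^ (1 / r)) ^ r := by
        rw [← Real.rpow_mul (sum_nonneg fun m _ => by positivity), one_div_mul_cancel hr.ne',
          Real.rpow_one]
    _ ≤ C ^ r := by gcongr

lemma card_quadric_le (hχ : χ ≠ 1) (hF : ringChar F ≠ 2) (hn : 2 ≤ Fintype.card ι)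
    (heven : Even (Fintype.card ι)) (ha : ∀ j, a j ≠ 0) :
    (#(quadric a) : ℝ) ≤ 2 * (Fintype.card F : ℝ) ^ ((Fintype.card ι : ℝ) - 1) := by
  have hQ : (1 : ℝ) ≤ Fintype.card F := by exact_mod_cast Fintype.card_pos
  have hn' : (2 : ℝ) ≤ Fintype.card ι := by exact_mod_cast hn
  set Q := (Fintype.card F : ℝ)
  set n := (Fintype.card ι : ℝ)
  have hmul : Q * #(quadric a) ≤ Q * (Q ^ (n - 1) + Q ^ (n / 2)) := by
    calc Q * #(quadric a) = ‖(Fintype.card F : ℂ) * #(quadric a)‖ := by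
          rw [norm_mul, Complex.norm_natCast, Complex.norm_natCast]
      _ ≤ Q ^ n + (Q - 1) * Q ^ (n / 2) := by
          rw [card_mul_card_quadric hχ hF heven ha]
          refine (norm_add_le _ _).trans_eq ?_
          rw [norm_card_sub_one_mul_prod_mul_gaussSum_pow hχ hF ha, norm_pow,
            Complex.norm_natCast, Real.rpow_natCast]
      _ ≤ Q * (Q ^ (n - 1) + Q ^ (n / 2)) := by
          have hQn : Q * Q ^ (n - 1) = Q ^ n := by
            rw [← Real.rpow_one_add' (by positivity) (by linarith), add_sub_cancel]
          nlinarith [Real.rpow_nonneg (by positivity : 0 ≤ Q) (n / 2)]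
  have hexp : Q ^ (n / 2) ≤ Q ^ (n - 1) := Real.rpow_le_rpow_of_exponent_le hQ (by linarith)
  nlinarith [le_of_mul_le_mul_left hmul (by positivity)]

lemma le_norm_extension_one_mul (hχ : χ ≠ 1) (hF : ringChar F ≠ 2)
    (heven : Even (Fintype.card ι)) (ha : ∀ j, a j ≠ 0) {y : ι → F}
    (hy : y ∈ (quadric a).erase 0) :
    (Fintype.card F : ℝ) ^ ((Fintype.card ι : ℝ) / 2) / (2 * #(quadric a)) ≤
      ‖extension χ a 1 (a * y)‖ := by
  have hQ : (2 : ℝ) ≤ Fintype.card F := by exact_mod_cast Fintype.one_lt_card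
  have hN : (0 : ℝ) < #(quadric a) := by exact_mod_cast card_pos.mpr ⟨y, mem_of_mem_erase hy⟩
  have hnorm : (Fintype.card F : ℝ) * #(quadric a) * ‖extension χ a 1 (a * y)‖ =
      (Fintype.card F - 1) * (Fintype.card F : ℝ) ^ ((Fintype.card ι : ℝ) / 2) := by
    rw [← norm_card_sub_one_mul_prod_mul_gaussSum_pow hχ hF ha,
      ← card_mul_sum_quadric_mul_of_mem hχ hF heven ha hy]
    simp only [extension, Pi.one_apply, one_mul, norm_mul, norm_inv, Complex.norm_natCast]
    field_simp
  rw [div_le_iff₀ (by positivity)]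
  nlinarith [norm_nonneg (extension χ a 1 (a * y)),
    Real.rpow_nonneg (Nat.cast_nonneg (Fintype.card F)) ((Fintype.card ι : ℝ) / 2)]

lemma card_sub_one_mul_rpow_le_sum (ha : ∀ j, a j ≠ 0) (f : (ι → F) → ℂ) {b : ℝ} (hb : 0 ≤ b)
    (hr : 0 ≤ r) (h : ∀ y ∈ (quadric a).erase 0, b ≤ ‖extension χ a f (a * y)‖) :
    (#(quadric a) - 1) * b ^ r ≤ ∑ m, ‖extension χ a f m‖ ^ r := by
  have hu : IsUnit a := Pi.isUnit_iff.mpr fun j => (ha j).isUnit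
  calc (#(quadric a) - 1) * b ^ r = #((quadric a).erase 0) • b ^ r := by
        rw [card_erase_of_mem (zero_mem_quadric a), nsmul_eq_mul,
          Nat.cast_sub (card_pos.mpr ⟨0, zero_mem_quadric a⟩), Nat.cast_one]
    _ ≤ ∑ y ∈ (quadric a).erase 0, ‖extension χ a f (a * y)‖ ^ r :=
        card_nsmul_le_sum _ _ _ fun y hy => Real.rpow_le_rpow hb (h y hy) hr
    _ ≤ ∑ y, ‖extension χ a f (a * y)‖ ^ r :=
        sum_le_univ_sum_of_nonneg fun y => by positivity
    _ = ∑ m, ‖extension χ a f m‖ ^ r :=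
        Fintype.sum_equiv (Units.mulLeft hu.unit) _ _ fun y => rfl

lemma sum_norm_extension_one_of_quadric_eq_singleton (hS : quadric a = {0}) :
    ∑ m, ‖extension χ a 1 m‖ ^ r = (Fintype.card F : ℝ) ^ Fintype.card ι := by
  simp [extension, hS]

end Extension

lemma rpow_one_sub_mul_rpow_le_of_sub_one_mul_rpow_le {A B N K r : ℝ} (hA : 0 < A) (hB : 0 ≤ B)
    (hN : 2 ≤ N) (hNA : N ≤ 2 * A) (hr : 1 ≤ r) (h : (N - 1) * (B / (2 * N)) ^ r ≤ K) :
    A ^ (1 - r) * B ^ r ≤ 4 ^ r * K := by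
  have h2r : (0 : ℝ) < 2 ^ r := by positivity
  have hNr : 0 < N ^ r := by positivity
  have h4 : (4 : ℝ) ^ r = 2 ^ r * 2 ^ r := by
    rw [← Real.mul_rpow (by norm_num) (by norm_num)]
    norm_num
  have h2 : (2 : ℝ) ^ (1 - r) = 2 / 2 ^ r := by rw [Real.rpow_sub two_pos, Real.rpow_one]
  have hN1 : N ^ (1 - r) = N / N ^ r := by rw [Real.rpow_sub (by linarith), Real.rpow_one]
  calc A ^ (1 - r) * B ^ r = 4 ^ r * ((2 * A) ^ (1 - r) * (B / 2) ^ r / 2) := by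
        rw [Real.mul_rpow (by norm_num) hA.le, Real.div_rpow hB (by norm_num), h2, h4]
        field_simp
    _ ≤ 4 ^ r * (N ^ (1 - r) * (B / 2) ^ r / 2) := by
        gcongr 4 ^ r * (?_ * _ / 2)
        exact Real.rpow_le_rpow_of_nonpos (by linarith) hNA (by linarith)
    _ = 4 ^ r * (N / 2 * (B / (2 * N)) ^ r) := by
        rw [hN1, Real.div_rpow hB (by norm_num), Real.div_rpow (y := 2 * N) hB (by positivity),
          Real.mul_rpow (x := 2) (y := N) (by norm_num) (by linarith)]
        field_simp
    _ ≤ 4 ^ r * ((N - 1) * (B / (2 * N)) ^ r) := by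
        gcongr
        linarith
    _ ≤ 4 ^ r * K := by gcongr

theorem ExtensionEstimate.rpow_le {F : Type*} [Field F] [Fintype F] {ι : Type*} [Fintype ι]
    [DecidableEq ι] {χ : AddChar F ℂ} {a : ι → F} {p r C : ℝ}
    (hest : ExtensionEstimate χ a p r C) (hF : ringChar F ≠ 2) (hn : 2 ≤ Fintype.card ι)
    (heven : Even (Fintype.card ι)) (hχ : χ ≠ 1) (ha : ∀ j, a j ≠ 0) (hr : 1 ≤ r) :
    (Fintype.card F : ℝ) ^ (((Fintype.card ι : ℝ) - 1) * (1 - r) + Fintype.card ι / 2 * r) ≤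
      4 ^ r * C ^ r := by
  have hQ : (1 : ℝ) ≤ Fintype.card F := by exact_mod_cast Fintype.card_pos
  have hn' : (2 : ℝ) ≤ Fintype.card ι := by exact_mod_cast hn
  have hsum := hest.sum_rpow_le (by linarith)
  by_cases hS : quadric a = {0}
  · rw [sum_norm_extension_one_of_quadric_eq_singleton hS] at hsum
    calc _ ≤ (Fintype.card F : ℝ) ^ (Fintype.card ι : ℝ) :=
          Real.rpow_le_rpow_of_exponent_le hQ (by nlinarith)
      _ ≤ C ^ r := by rwa [Real.rpow_natCast]
      _ ≤ 4 ^ r * C ^ r :=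
          le_mul_of_one_le_left (le_trans (by positivity) hsum)
            (Real.one_le_rpow (by norm_num) (by linarith))
  · have hN : 1 < #(quadric a) := one_lt_card_iff_nontrivial.mpr
      ((nontrivial_iff_ne_singleton (zero_mem_quadric a)).mpr hS)
    have key := rpow_one_sub_mul_rpow_le_of_sub_one_mul_rpow_le (by positivity) (by positivity)
      (by exact_mod_cast hN) (card_quadric_le hχ hF hn heven ha) hr
      ((card_sub_one_mul_rpow_le_sum ha 1 (by positivity) (by linarith)
        fun y hy => le_norm_extension_one_mul hχ hF heven ha hy).trans hsum)
    rwa [← Real.rpow_mul (by positivity), ← Real.rpow_mul (by positivity),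
      ← Real.rpow_add (by positivity)] at key

lemma nonpos_of_frequently_rpow_le {δ K : ℝ} (h : ∀ n : ℕ, ∃ q ≥ n, (q : ℝ) ^ δ ≤ K) :
    δ ≤ 0 := by
  by_contra! hδ
  obtain ⟨n, hn⟩ := Filter.eventually_atTop.mp
    (((tendsto_rpow_atTop hδ).comp tendsto_natCast_atTop_atTop).eventually_gt_atTop K)
  obtain ⟨q, hq, hqK⟩ := h n
  exact (hn q hq).not_ge hqK

lemma div_le_ofReal_of_le_mul {d : ℕ} {r : ℝ} (hd : 2 ≤ d) (h : 2 * (d : ℝ) - 2 ≤ r * (d - 2)) :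
    (2 * (d : ℝ≥0∞) - 2) / ((d : ℝ≥0∞) - 2) ≤ ENNReal.ofReal r := by
  have hd' : (2 : ℝ) ≤ d := by exact_mod_cast hd
  have h2d : 2 * (d : ℝ≥0∞) - 2 = ENNReal.ofReal (2 * d - 2) := by
    rw [ENNReal.ofReal_sub _ zero_le_two, ENNReal.ofReal_mul zero_le_two]
    simp
  have hd2 : (d : ℝ≥0∞) - 2 = ENNReal.ofReal (d - 2) := by
    rw [ENNReal.ofReal_sub _ zero_le_two]
    simp
  rw [h2d, hd2]
  refine ENNReal.div_le_of_le_mul ?_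
  rw [← ENNReal.ofReal_mul' (by linarith)]
  exact ENNReal.ofReal_le_ofReal h

theorem statement12_general (d : ℕ) (hd : 2 ≤ d) (heven : Even d)
    (p r C : ℝ) (hr : 1 ≤ r)
    (H : ∀ (F : Type) [Field F] [Fintype F], ringChar F ≠ 2 →
      ∃ (χ : AddChar F ℂ) (a : Fin d → F),
        χ ≠ 1 ∧ (∀ j, a j ≠ 0) ∧
        ∀ f : (Fin d → F) → ℂ,
          (∑ m : Fin d → F,
              ‖((Finset.univ.filter fun x : Fin d → F =>
                    ∑ j, a j * x j ^ 2 = 0).card : ℂ)⁻¹ *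
                ∑ x ∈ Finset.univ.filter fun x : Fin d → F => ∑ j, a j * x j ^ 2 = 0,
                  f x * χ (∑ j, x j * m j)‖ ^ r) ^ ((1 : ℝ) / r) ≤
            C * (((Finset.univ.filter fun x : Fin d → F =>
                    ∑ j, a j * x j ^ 2 = 0).card : ℝ)⁻¹ *
                ∑ x ∈ Finset.univ.filter fun x : Fin d → F => ∑ j, a j * x j ^ 2 = 0,
                  ‖f x‖ ^ p) ^ ((1 : ℝ) / p)) :
    ENNReal.ofReal r ≥ (2 * (d : ℝ≥0∞) - 2) / ((d : ℝ≥0∞) - 2) := by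
  have hbound : ∀ n : ℕ, ∃ q ≥ n,
      (q : ℝ) ^ (((d : ℝ) - 1) * (1 - r) + d / 2 * r) ≤ 4 ^ r * C ^ r := by
    intro n
    obtain ⟨q, hqn, hq⟩ := Nat.exists_infinite_primes (n + 3)
    have := Fact.mk hq
    have hchar : ringChar (ZMod q) ≠ 2 := by rw [ZMod.ringChar_zmod_n]; omega
    obtain ⟨χ, a, hχ, ha, hest⟩ := H (ZMod q) hchar
    have key := (show ExtensionEstimate χ a p r C from hest).rpow_le hchar (by simpa using hd)
      (by simpa using heven) hχ ha hr
    refine ⟨q, by omega, ?_⟩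
    simpa [ZMod.card] using key
  have hδ := nonpos_of_frequently_rpow_le hbound
  exact div_le_ofReal_of_le_mul hd (by linarith)

/-- necessary condition in even dimensions. If for every finite field of
odd characteristic there are a nontrivial additive character and nonzero coefficients
`a₁,…,a_d` for which the extension estimate `R*(p → r) ≤ C` holds with `C` independent
of `q`, then `r ≥ (2d−2)/(d−2)` (read in `ℝ≥0∞`, so the case `d = 2` forces `r = ∞`,
i.e. the hypothesis cannot hold). -/
theorem statement12 (d : ℕ) (hd : 2 ≤ d) (heven : Even d)
    (p r C : ℝ) (hp : 1 ≤ p) (hr : 1 ≤ r) (hC : 0 < C)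
    (H : ∀ (F : Type) [Field F] [Fintype F], ringChar F ≠ 2 →
      ∃ (χ : AddChar F ℂ) (a : Fin d → F),
        χ ≠ 1 ∧ (∀ j, a j ≠ 0) ∧
        ∀ f : (Fin d → F) → ℂ,
          (∑ m : Fin d → F,
              ‖((Finset.univ.filter fun x : Fin d → F =>
                    ∑ j, a j * x j ^ 2 = 0).card : ℂ)⁻¹ *
                ∑ x ∈ Finset.univ.filter fun x : Fin d → F => ∑ j, a j * x j ^ 2 = 0,
                  f x * χ (∑ j, x j * m j)‖ ^ r) ^ ((1 : ℝ) / r) ≤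
            C * (((Finset.univ.filter fun x : Fin d → F =>
                    ∑ j, a j * x j ^ 2 = 0).card : ℝ)⁻¹ *
                ∑ x ∈ Finset.univ.filter fun x : Fin d → F => ∑ j, a j * x j ^ 2 = 0,
                  ‖f x‖ ^ p) ^ ((1 : ℝ) / p)) :
    ENNReal.ofReal r ≥ (2 * (d : ℝ≥0∞) - 2) / ((d : ℝ≥0∞) - 2) :=
  statement12_general d hd heven p r C hr H
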